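/- The Choi map φ_{C₁} : M_3(ℂ) → M_3(ℂ) (as defined by φ_{C₁}((x_{ij})) = (1/2)·[[x₁₁+x₂₂, −x₁₂, −x₁₃], [−x₂₁, x₂₂+x₃₃, −x₂₃], [−x₃₁, −x₃₂, x₃₃+x₁₁]]) is not completely positive. -/

import Mathlib

open Matrix ComplexOrder

/-- The Choi map `φ_{C₁}` on `M₃(ℂ)`. -/
noncomputable def choi1 (x : Matrix (Fin 3) (Fin 3) ℂ) : Matrix (Fin 3) (Fin 3) ℂ :=
  (1 / 2 : ℂ) •
    !![x 0 0 + x 1 1, -x 0 1, -x 0 2;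
       -x 1 0, x 1 1 + x 2 2, -x 1 2;
       -x 2 0, -x 2 1, x 2 2 + x 0 0]

/-- The extension `id_d ⊗ φ` of a map `φ` on `M_n(ℂ)`, acting blockwise. -/
noncomputable def matExt {n : ℕ} (φ : Matrix (Fin n) (Fin n) ℂ → Matrix (Fin n) (Fin n) ℂ)
    (d : ℕ) (ρ : Matrix (Fin d × Fin n) (Fin d × Fin n) ℂ) :
    Matrix (Fin d × Fin n) (Fin d × Fin n) ℂ :=
  Matrix.of fun p q => φ (Matrix.of fun a b => ρ (p.1, a) (q.1, b)) p.2 q.2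

variable {n : ℕ}

/-- The unnormalized maximally entangled vector `∑ᵢ eᵢ ⊗ eᵢ`. -/
def maxEntangled (n : ℕ) : Fin n × Fin n → ℂ := fun p => if p.1 = p.2 then 1 else 0

noncomputable def choiMatrix (φ : Matrix (Fin n) (Fin n) ℂ → Matrix (Fin n) (Fin n) ℂ) :
    Matrix (Fin n × Fin n) (Fin n × Fin n) ℂ :=
  of fun p q => φ (single p.1 q.1 1) p.2 q.2

theorem matExt_vecMulVec_maxEntangled (φ : Matrix (Fin n) (Fin n) ℂ → Matrix (Fin n) (Fin n) ℂ) :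
    matExt φ n (vecMulVec (maxEntangled n) (star (maxEntangled n))) = choiMatrix φ := by
  ext p q
  simp only [matExt, choiMatrix, of_apply, vecMulVec_apply, maxEntangled, Pi.star_apply]
  congr 2
  ext a b
  by_cases ha : a = p.1 <;> by_cases hb : b = q.1 <;> simp [ha, hb, eq_comm]

theorem posSemidef_choiMatrix {φ : Matrix (Fin n) (Fin n) ℂ → Matrix (Fin n) (Fin n) ℂ}
    (hφ : ∀ (d : ℕ) (ρ : Matrix (Fin d × Fin n) (Fin d × Fin n) ℂ),
      ρ.PosSemidef → (matExt φ d ρ).PosSemidef) :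
    (choiMatrix φ).PosSemidef :=
  matExt_vecMulVec_maxEntangled φ ▸ hφ n _ (posSemidef_vecMulVec_self_star _)

theorem star_maxEntangled_dotProduct_choiMatrix_mulVec
    (φ : Matrix (Fin n) (Fin n) ℂ → Matrix (Fin n) (Fin n) ℂ) :
    star (maxEntangled n) ⬝ᵥ choiMatrix φ *ᵥ maxEntangled n = ∑ i, ∑ j, φ (single i j 1) i j := by
  simp [dotProduct, mulVec, maxEntangled, choiMatrix, Fintype.sum_prod_type]

-- The three diagonal terms contribute `1/2` each, the six off-diagonal ones `-1/2` each.
theorem sum_choi1_single_apply : ∑ i, ∑ j, choi1 (single i j 1) i j = -3 / 2 := by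
  simp [Fin.sum_univ_three, choi1]
  norm_num

theorem choi1_not_completely_positive :
    ¬ ∀ (d : ℕ) (ρ : Matrix (Fin d × Fin 3) (Fin d × Fin 3) ℂ),
        ρ.PosSemidef → (matExt choi1 d ρ).PosSemidef := by
  intro hφ
  have hpos := (posSemidef_choiMatrix hφ).dotProduct_mulVec_nonneg (maxEntangled 3)
  rw [star_maxEntangled_dotProduct_choiMatrix_mulVec, sum_choi1_single_apply] at hpos
  norm_num [Complex.le_def] at hpos
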